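/- arXiv:2604.13259 — 2 statements merged into one kernel-verified Lean document; each statement's English description precedes it below -/
import Mathlib

section
/- Let Q₁ and Q₂ be generator matrices on Fin N, each satisfying the mixing estimate with common constants C ≥ 1 and γ > 0, and suppose ‖Q₁ᵀ − Q₂ᵀ‖_{1→1} ≤ ε, where ‖·‖_{1→1} denotes the operator norm induced by the ℓ¹ norm. Let μ₁, μ₂ ∈ Δ satisfy Q₁ᵀ *ᵥ μ₁ = 0 and Q₂ᵀ *ᵥ μ₂ = 0. Then ‖μ₁ − μ₂‖₁ ≤ (C/γ) * ε. In particular, if Q : ℝ^d → Matrix (Fin N) (Fin N) ℝ is a family with ‖(Q θ)ᵀ − (Q θ̄)ᵀ‖_{1→1} ≤ L_Q * ‖θ − θ̄‖, the stationary laws satisfy ‖μ_θ − μ_{θ̄}‖₁ ≤ (C * L_Q / γ) * ‖θ − θ̄‖. -/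
/-!
Write `A = Q₁ᵀ`, `ξ = μ₁ - μ₂` and `v = A μ₂ = (Q₁ᵀ - Q₂ᵀ) μ₂`, so that `‖v‖₁ ≤ ε`. Since `μ₁` is
fixed by `exp (t A)`, Duhamel's formula gives
`ξ = exp (t A) ξ + (exp (t A) μ₂ - μ₂) = exp (t A) ξ + ∫₀ᵗ exp (s A) v ds`.
Both `ξ` and `v` have zero sum, so the mixing estimate bounds the first term by `C e^{-γt} ‖ξ‖₁` and
the integrand by `C e^{-γs} ε`; letting `t → ∞` leaves `‖ξ‖₁ ≤ (C / γ) ε`.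
-/

open Matrix Filter Topology

/-- The probability simplex on `Fin N`. -/
def probSimplex (N : ℕ) : Set (Fin N → ℝ) :=
  {μ | (∀ i, 0 ≤ μ i) ∧ ∑ i, μ i = 1}

/-- The ℓ¹ norm on `Fin N → ℝ`. -/
def l1norm {N : ℕ} (x : Fin N → ℝ) : ℝ := ∑ i, |x i|

/-- A generator (transition-rate) matrix: nonnegative off-diagonal entries and zero row sums. -/
def IsGenerator {N : ℕ} (Q : Matrix (Fin N) (Fin N) ℝ) : Prop :=
  (∀ i j, i ≠ j → 0 ≤ Q i j) ∧ (∀ i, ∑ j, Q i j = 0)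

/-- The uniform exponential mixing estimate on the zero-sum subspace. -/
def MixingEstimate {N : ℕ} (Q : Matrix (Fin N) (Fin N) ℝ) (C γ : ℝ) : Prop :=
  ∀ ξ : Fin N → ℝ, (∑ i, ξ i) = 0 → ∀ t : ℝ, 0 ≤ t →
    l1norm (NormedSpace.exp (t • Qᵀ) *ᵥ ξ) ≤ C * Real.exp (-γ * t) * l1norm ξ

section MatrixExp

variable {n : Type*} [Fintype n] [DecidableEq n]

theorem hasDerivAt_exp_smul_mulVec (A : Matrix n n ℝ) (v : n → ℝ) (t : ℝ) :
    HasDerivAt (fun s : ℝ => NormedSpace.exp (s • A) *ᵥ v)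
      (NormedSpace.exp (t • A) *ᵥ (A *ᵥ v)) t := by
  -- `NormedSpace.exp` depends only on the topology, so any algebra norm may be used here.
  let _ : NormedRing (Matrix n n ℝ) := Matrix.linftyOpNormedRing
  let _ : NormedAlgebra ℝ (Matrix n n ℝ) := Matrix.linftyOpNormedAlgebra
  let L : Matrix n n ℝ →L[ℝ] n → ℝ := ((mulVecBilin ℝ ℝ).flip v).toContinuousLinearMap
  rw [mulVec_mulVec]
  exact L.hasFDerivAt.comp_hasDerivAt t (hasDerivAt_exp_smul_const A t)

theorem continuous_exp_smul_mulVec (A : Matrix n n ℝ) (v : n → ℝ) :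
    Continuous fun s : ℝ => NormedSpace.exp (s • A) *ᵥ v :=
  continuous_iff_continuousAt.2 fun s => (hasDerivAt_exp_smul_mulVec A v s).continuousAt

theorem exp_smul_mulVec_sub_eq_integral (A : Matrix n n ℝ) (v : n → ℝ) (t : ℝ) :
    NormedSpace.exp (t • A) *ᵥ v - v =
      ∫ s in (0 : ℝ)..t, NormedSpace.exp (s • A) *ᵥ (A *ᵥ v) := by
  rw [intervalIntegral.integral_eq_sub_of_hasDerivAt (fun s _ => hasDerivAt_exp_smul_mulVec A v s)
    ((continuous_exp_smul_mulVec A (A *ᵥ v)).intervalIntegrable 0 t)]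
  simp

theorem exp_smul_mulVec_of_mulVec_eq_zero {A : Matrix n n ℝ} {v : n → ℝ} (h : A *ᵥ v = 0)
    (t : ℝ) :
    NormedSpace.exp (t • A) *ᵥ v = v := by
  simpa [h, sub_eq_zero] using exp_smul_mulVec_sub_eq_integral A v t

end MatrixExp

theorem sum_transpose_mulVec_eq_zero {n : Type*} [Fintype n] {Q : Matrix n n ℝ}
    (hQ : ∀ i, ∑ j, Q i j = 0) (x : n → ℝ) : ∑ i, (Qᵀ *ᵥ x) i = 0 := by
  simp only [mulVec, dotProduct, transpose_apply]
  rw [Finset.sum_comm]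
  simp [← Finset.sum_mul, hQ]

theorem integral_exp_neg_mul {γ : ℝ} (hγ : γ ≠ 0) (t : ℝ) :
    ∫ s in (0 : ℝ)..t, Real.exp (-γ * s) = (1 - Real.exp (-γ * t)) / γ := by
  rw [intervalIntegral.integral_comp_mul_left (fun s => Real.exp s) (neg_ne_zero.2 hγ),
    integral_exp]
  simp only [mul_zero, Real.exp_zero, smul_eq_mul]
  field_simp
  ring

section L1

variable {N : ℕ}

theorem l1norm_eq_norm_toLp (x : Fin N → ℝ) : l1norm x = ‖WithLp.toLp 1 x‖ := by
  simp [l1norm, PiLp.norm_eq_of_L1]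

theorem l1norm_add_le (x y : Fin N → ℝ) : l1norm (x + y) ≤ l1norm x + l1norm y := by
  simpa only [l1norm_eq_norm_toLp, WithLp.toLp_add] using norm_add_le _ _

theorem l1norm_eq_one_of_mem_probSimplex {μ : Fin N → ℝ} (hμ : μ ∈ probSimplex N) :
    l1norm μ = 1 := by
  rw [l1norm, ← hμ.2]
  exact Finset.sum_congr rfl fun i _ => abs_of_nonneg (hμ.1 i)

theorem l1norm_intervalIntegral_le {f : ℝ → Fin N → ℝ} (hf : Continuous f) {t : ℝ}
    (ht : 0 ≤ t) : l1norm (∫ s in (0 : ℝ)..t, f s) ≤ ∫ s in (0 : ℝ)..t, l1norm (f s) := by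
  have hcomm := (PiLp.continuousLinearEquiv 1 ℝ fun _ : Fin N => ℝ).symm.toContinuousLinearMap
    |>.intervalIntegral_comp_comm (μ := MeasureTheory.volume) (hf.intervalIntegrable 0 t)
  simp only [ContinuousLinearEquiv.coe_coe, PiLp.coe_symm_continuousLinearEquiv] at hcomm
  simp only [l1norm_eq_norm_toLp, ← hcomm]
  exact intervalIntegral.norm_integral_le_integral_norm ht

end L1

section Mixing

variable {N : ℕ} {Q : Matrix (Fin N) (Fin N) ℝ} {C γ : ℝ}

theorem MixingEstimate.l1norm_exp_smul_mulVec_sub_le (hmix : MixingEstimate Q C γ)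
    (hγ : γ ≠ 0) (hQ : ∀ i, ∑ j, Q i j = 0) (x : Fin N → ℝ) {t : ℝ} (ht : 0 ≤ t) :
    l1norm (NormedSpace.exp (t • Qᵀ) *ᵥ x - x) ≤
      C * ((1 - Real.exp (-γ * t)) / γ) * l1norm (Qᵀ *ᵥ x) := by
  have hcont := continuous_exp_smul_mulVec Qᵀ (Qᵀ *ᵥ x)
  have hcont_l1 : Continuous fun s : ℝ => l1norm (NormedSpace.exp (s • Qᵀ) *ᵥ (Qᵀ *ᵥ x)) :=
    continuous_finsetSum _ fun i _ => ((continuous_apply i).comp hcont).abs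
  calc l1norm (NormedSpace.exp (t • Qᵀ) *ᵥ x - x)
      ≤ ∫ s in (0 : ℝ)..t, l1norm (NormedSpace.exp (s • Qᵀ) *ᵥ (Qᵀ *ᵥ x)) := by
        rw [exp_smul_mulVec_sub_eq_integral]
        exact l1norm_intervalIntegral_le hcont ht
    _ ≤ ∫ s in (0 : ℝ)..t, C * Real.exp (-γ * s) * l1norm (Qᵀ *ᵥ x) :=
        intervalIntegral.integral_mono_on ht (hcont_l1.intervalIntegrable 0 t)
          ((by fun_prop : Continuous fun s => C * Real.exp (-γ * s) * l1norm (Qᵀ *ᵥ x))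
            |>.intervalIntegrable 0 t)
          fun s hs => hmix _ (sum_transpose_mulVec_eq_zero hQ x) s hs.1
    _ = C * ((1 - Real.exp (-γ * t)) / γ) * l1norm (Qᵀ *ᵥ x) := by
        rw [intervalIntegral.integral_mul_const, intervalIntegral.integral_const_mul,
          integral_exp_neg_mul hγ]

theorem MixingEstimate.l1norm_sub_le (hmix : MixingEstimate Q C γ) (hγ : 0 < γ)
    (hQ : ∀ i, ∑ j, Q i j = 0) {μ ν : Fin N → ℝ} (hμ : Qᵀ *ᵥ μ = 0)
    (hsum : ∑ i, μ i = ∑ i, ν i) :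
    l1norm (μ - ν) ≤ C / γ * l1norm (Qᵀ *ᵥ ν) := by
  have hξ : ∑ i, (μ - ν) i = 0 := by simp [Finset.sum_sub_distrib, hsum]
  have hbound : ∀ t ≥ (0 : ℝ), l1norm (μ - ν) ≤ C * Real.exp (-γ * t) * l1norm (μ - ν) +
      C * ((1 - Real.exp (-γ * t)) / γ) * l1norm (Qᵀ *ᵥ ν) := by
    intro t ht
    have hdecomp : μ - ν = NormedSpace.exp (t • Qᵀ) *ᵥ (μ - ν) +
        (NormedSpace.exp (t • Qᵀ) *ᵥ ν - ν) := by
      rw [mulVec_sub, exp_smul_mulVec_of_mulVec_eq_zero hμ]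
      abel
    calc l1norm (μ - ν)
        ≤ l1norm (NormedSpace.exp (t • Qᵀ) *ᵥ (μ - ν)) +
            l1norm (NormedSpace.exp (t • Qᵀ) *ᵥ ν - ν) :=
          (congrArg l1norm hdecomp).trans_le (l1norm_add_le _ _)
      _ ≤ _ := add_le_add (hmix _ hξ t ht)
          (hmix.l1norm_exp_smul_mulVec_sub_le hγ.ne' hQ ν ht)
  have hdecay : Tendsto (fun t => Real.exp (-γ * t)) atTop (𝓝 0) :=
    Real.tendsto_exp_atBot.comp (tendsto_id.const_mul_atTop_of_neg (neg_neg_of_pos hγ))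
  have hlimit := ((by fun_prop : Continuous fun e => C * e * l1norm (μ - ν) +
      C * ((1 - e) / γ) * l1norm (Qᵀ *ᵥ ν)).tendsto 0).comp hdecay
  rw [show C / γ * l1norm (Qᵀ *ᵥ ν) =
    C * 0 * l1norm (μ - ν) + C * ((1 - 0) / γ) * l1norm (Qᵀ *ᵥ ν) by ring]
  exact ge_of_tendsto hlimit (eventually_ge_atTop 0 |>.mono hbound)

end Mixing

theorem stationary_law_lipschitz_general {N : ℕ}
    (Q₁ Q₂ : Matrix (Fin N) (Fin N) ℝ) (hQ₁ : IsGenerator Q₁)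
    (C γ : ℝ) (hC : 1 ≤ C) (hγ : 0 < γ)
    (hmix₁ : MixingEstimate Q₁ C γ)
    (ε : ℝ)
    (hop : ∀ x : Fin N → ℝ, l1norm ((Q₁ᵀ - Q₂ᵀ) *ᵥ x) ≤ ε * l1norm x)
    (μ₁ μ₂ : Fin N → ℝ) (hμ₁ : μ₁ ∈ probSimplex N) (hμ₂ : μ₂ ∈ probSimplex N)
    (hstat₁ : Q₁ᵀ *ᵥ μ₁ = 0) (hstat₂ : Q₂ᵀ *ᵥ μ₂ = 0) :
    l1norm (μ₁ - μ₂) ≤ C / γ * ε := by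
  have hdefect : Q₁ᵀ *ᵥ μ₂ = (Q₁ᵀ - Q₂ᵀ) *ᵥ μ₂ := by rw [sub_mulVec, hstat₂, sub_zero]
  calc l1norm (μ₁ - μ₂) ≤ C / γ * l1norm (Q₁ᵀ *ᵥ μ₂) :=
        hmix₁.l1norm_sub_le hγ hQ₁.2 hstat₁ (hμ₁.2.trans hμ₂.2.symm)
    _ ≤ C / γ * ε := by
        have hCγ : 0 ≤ C / γ := div_nonneg (zero_le_one.trans hC) hγ.le
        gcongr
        simpa [hdefect, l1norm_eq_one_of_mem_probSimplex hμ₂] using hop μ₂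

theorem stationary_law_lipschitz {N : ℕ} (hN : 1 ≤ N)
    (Q₁ Q₂ : Matrix (Fin N) (Fin N) ℝ) (hQ₁ : IsGenerator Q₁) (hQ₂ : IsGenerator Q₂)
    (C γ : ℝ) (hC : 1 ≤ C) (hγ : 0 < γ)
    (hmix₁ : MixingEstimate Q₁ C γ) (hmix₂ : MixingEstimate Q₂ C γ)
    (ε : ℝ) (hε : 0 ≤ ε)
    (hop : ∀ x : Fin N → ℝ, l1norm ((Q₁ᵀ - Q₂ᵀ) *ᵥ x) ≤ ε * l1norm x)
    (μ₁ μ₂ : Fin N → ℝ) (hμ₁ : μ₁ ∈ probSimplex N) (hμ₂ : μ₂ ∈ probSimplex N)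
    (hstat₁ : Q₁ᵀ *ᵥ μ₁ = 0) (hstat₂ : Q₂ᵀ *ᵥ μ₂ = 0) :
    l1norm (μ₁ - μ₂) ≤ C / γ * ε :=
  stationary_law_lipschitz_general Q₁ Q₂ hQ₁ C γ hC hγ hmix₁ ε hop μ₁ μ₂ hμ₁ hμ₂ hstat₁ hstat₂
end

section
/- Let N ≥ 2, let Q be a generator matrix on Fin N, let k⋆ : Fin N, and let q⋆ > 0 and q̄ > 0 satisfy Q i k⋆ ≥ q⋆ for every i ≠ k⋆ and ∑_{j ≠ i} Q i j ≤ q̄ for every i. Set α⋆ := exp(−q̄/q⋆) and γ⋆ := q⋆ * Real.log (1/(1 − α⋆)). Then α⋆ < 1, and for every ξ in the zero-sum subspace Z and every t ≥ 0, ‖exp(t • Qᵀ) *ᵥ ξ‖₁ ≤ (1 − α⋆)⁻¹ * exp(−γ⋆ * t) * ‖ξ‖₁. -/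
open Matrix

/-! Uniformization: adding `q̄` to the diagonal of `Q` makes it entrywise nonnegative, so
`exp (s • Q) = e^{-s q̄} • exp (s • Q + s q̄ • 1)` is row-stochastic for `s ≥ 0`, and at
`s = 1/q⋆` it dominates `α⋆ • (1 + Q/q⋆ + (q̄/q⋆) • 1)`, whose column `k⋆` is at least `1`.
Hence `P = exp (Q/q⋆)` satisfies Doeblin's condition `α⋆ ≤ P i k⋆`, and `Pᵀ` contracts the
ℓ¹ norm of zero-sum vectors by the factor `1 - α⋆`. Splitting `t = m/q⋆ + r` with
`m = ⌊t q⋆⌋` gives `(1 - α⋆)^m ≤ (1 - α⋆)⁻¹ (1 - α⋆)^{t q⋆}`, the remaining factor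
`exp (r • Q)ᵀ` being an ℓ¹ contraction. -/

open NormedSpace Finset

namespace Matrix

section Exp

variable {n : Type*} [Fintype n] [DecidableEq n]

attribute [local instance] Matrix.linftyOpNormedRing Matrix.linftyOpNormedAlgebra

theorem hasSum_exp_apply (A : Matrix n n ℝ) (i j : n) :
    HasSum (fun k : ℕ => (k.factorial : ℝ)⁻¹ * (A ^ k) i j) (exp A i j) :=
  Pi.hasSum.mp (Pi.hasSum.mp (exp_series_hasSum_exp' (𝕂 := ℝ) A) i) j

theorem hasSum_exp_mulVec_apply (A : Matrix n n ℝ) (v : n → ℝ) (i : n) :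
    HasSum (fun k : ℕ => (k.factorial : ℝ)⁻¹ * (A ^ k *ᵥ v) i) ((exp A *ᵥ v) i) := by
  simp only [mulVec, dotProduct, mul_sum, ← mul_assoc]
  exact hasSum_sum fun j _ => (A.hasSum_exp_apply i j).mul_right (v j)

theorem exp_nonneg_apply {B : Matrix n n ℝ} (hB : ∀ i j, 0 ≤ B i j) (i j : n) :
    0 ≤ exp B i j :=
  (B.hasSum_exp_apply i j).nonneg fun k => mul_nonneg (by positivity) (pow_apply_nonneg hB k i j)

theorem one_add_apply_le_exp_apply {B : Matrix n n ℝ} (hB : ∀ i j, 0 ≤ B i j) (i j : n) :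
    (1 + B) i j ≤ exp B i j :=
  calc (1 + B) i j = ∑ k ∈ range 2, (k.factorial : ℝ)⁻¹ * (B ^ k) i j := by
        simp [sum_range_succ]
    _ ≤ exp B i j := sum_le_hasSum _ (fun k _ => mul_nonneg (by positivity)
        (pow_apply_nonneg hB k i j)) (B.hasSum_exp_apply i j)

theorem exp_mulVec_eq_self {A : Matrix n n ℝ} {v : n → ℝ} (hv : A *ᵥ v = 0) :
    exp A *ᵥ v = v := by
  funext i
  refine (A.hasSum_exp_mulVec_apply v i).unique ?_
  convert hasSum_ite_eq 0 (v i) using 2 with k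
  rcases k with _ | k
  · simp
  · simp [pow_succ, ← mulVec_mulVec, hv]

theorem exp_smul_one (c : ℝ) : exp (c • (1 : Matrix n n ℝ)) = Real.exp c • 1 := by
  rw [smul_one_eq_diagonal, exp_diagonal, smul_one_eq_diagonal, Pi.exp_def, Real.exp_eq_exp_ℝ]

theorem exp_add_smul_one (B : Matrix n n ℝ) (c : ℝ) :
    exp (B + c • 1) = Real.exp c • exp B := by
  rw [exp_add_of_commute B _ ((Commute.one_right B).smul_right c), exp_smul_one, mul_smul_comm,
    mul_one]

theorem exp_eq_exp_neg_smul_exp_add_smul_one (A : Matrix n n ℝ) (c : ℝ) :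
    exp A = Real.exp (-c) • exp (A + c • 1) := by
  rw [← exp_add_smul_one, neg_smul, add_neg_cancel_right]

theorem exp_smul_eq_pow_mul_exp_smul (A : Matrix n n ℝ) (t τ : ℝ) (m : ℕ) :
    exp (t • A) = exp (τ • A) ^ m * exp ((t - m * τ) • A) := by
  have hsplit : t • A = m • (τ • A) + (t - m * τ) • A := by
    rw [← Nat.cast_smul_eq_nsmul ℝ, smul_smul, ← add_smul]
    ring_nf
  have hcomm : Commute (m • (τ • A)) ((t - m * τ) • A) :=
    (((Commute.refl A).smul_left τ).smul_right _).smul_left m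
  rw [hsplit, exp_add_of_commute _ _ hcomm, exp_nsmul]

end Exp

theorem exists_forall_neg_le_diag {n : Type*} [Fintype n] (A : Matrix n n ℝ) :
    ∃ q, ∀ i, -q ≤ A i i :=
  ⟨∑ i, |A i i|, fun i => neg_le.1 <| (neg_le_abs _).trans <|
    single_le_sum (fun j _ => abs_nonneg (A j j)) (mem_univ i)⟩

end Matrix

theorem Real.pow_floor_le_inv_mul_rpow {β : ℝ} (hβ0 : 0 < β) (hβ1 : β ≤ 1) (x : ℝ) :
    β ^ ⌊x⌋₊ ≤ β⁻¹ * β ^ x := by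
  have h : β ^ ((⌊x⌋₊ : ℝ) + 1) ≤ β ^ x :=
    Real.rpow_le_rpow_of_exponent_ge hβ0 hβ1 (Nat.lt_floor_add_one x).le
  rw [Real.rpow_add hβ0, Real.rpow_one, Real.rpow_natCast] at h
  rwa [le_inv_mul_iff₀ hβ0, mul_comm]

section Stochastic

variable {N : ℕ}

theorem l1norm_nonneg (x : Fin N → ℝ) : 0 ≤ l1norm x :=
  sum_nonneg fun i _ => abs_nonneg (x i)

theorem l1norm_transpose_mulVec_le {M : Matrix (Fin N) (Fin N) ℝ} {c : ℝ}
    (hM : ∀ i j, 0 ≤ M i j) (hrow : ∀ i, ∑ j, M i j ≤ c) (ξ : Fin N → ℝ) :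
    l1norm (Mᵀ *ᵥ ξ) ≤ c * l1norm ξ :=
  calc l1norm (Mᵀ *ᵥ ξ) = ∑ j, |∑ i, M i j * ξ i| := by
        simp [l1norm, mulVec, dotProduct]
    _ ≤ ∑ j, ∑ i, M i j * |ξ i| := by
        gcongr with j
        refine (abs_sum_le_sum_abs _ _).trans_eq (sum_congr rfl fun i _ => ?_)
        rw [abs_mul, abs_of_nonneg (hM i j)]
    _ = ∑ i, (∑ j, M i j) * |ξ i| := by
        rw [sum_comm]
        simp only [sum_mul]
    _ ≤ ∑ i, c * |ξ i| := by
        gcongr with i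
        exact hrow i
    _ = c * l1norm ξ := by rw [l1norm, mul_sum]

theorem l1norm_transpose_mulVec_le_of_mem_rowStochastic {P : Matrix (Fin N) (Fin N) ℝ}
    (hP : P ∈ rowStochastic ℝ (Fin N)) (ξ : Fin N → ℝ) : l1norm (Pᵀ *ᵥ ξ) ≤ l1norm ξ := by
  simpa using l1norm_transpose_mulVec_le (fun i j => nonneg_of_mem_rowStochastic hP)
    (fun i => (sum_row_of_mem_rowStochastic hP i).le) ξ

/-- Doeblin's contraction: subtracting `α` from column `k` leaves a nonnegative matrix with row
sums `1 - α`, which acts like `P` on zero-sum vectors. -/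
theorem l1norm_transpose_mulVec_le_of_le_apply {P : Matrix (Fin N) (Fin N) ℝ} {α : ℝ}
    {k : Fin N} (hP : P ∈ rowStochastic ℝ (Fin N)) (hPk : ∀ i, α ≤ P i k)
    {ξ : Fin N → ℝ} (hξ : ∑ i, ξ i = 0) : l1norm (Pᵀ *ᵥ ξ) ≤ (1 - α) * l1norm ξ := by
  set M : Matrix (Fin N) (Fin N) ℝ := P - of fun _ => Pi.single k α
  have hM : ∀ i j, 0 ≤ M i j := by
    intro i j
    rcases eq_or_ne j k with rfl | hj
    · simpa [M] using hPk i
    · simpa [M, hj] using nonneg_of_mem_rowStochastic hP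
  have hMrow : ∀ i, ∑ j, M i j ≤ 1 - α := fun i => by
    simp [M, sum_sub_distrib, sum_row_of_mem_rowStochastic hP i]
  have hMξ : Mᵀ *ᵥ ξ = Pᵀ *ᵥ ξ := by
    ext j
    simp [M, mulVec, dotProduct, sub_mul, sum_sub_distrib, ← mul_sum, hξ]
  rw [← hMξ]
  exact l1norm_transpose_mulVec_le hM hMrow ξ

theorem l1norm_transpose_pow_mulVec_le_of_le_apply {P : Matrix (Fin N) (Fin N) ℝ} {α : ℝ}
    {k : Fin N} (hP : P ∈ rowStochastic ℝ (Fin N)) (hPk : ∀ i, α ≤ P i k)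
    {ξ : Fin N → ℝ} (hξ : ∑ i, ξ i = 0) (m : ℕ) :
    l1norm (Pᵀ ^ m *ᵥ ξ) ≤ (1 - α) ^ m * l1norm ξ := by
  have hα : 0 ≤ 1 - α := sub_nonneg.2 ((hPk k).trans (le_one_of_mem_rowStochastic hP))
  have hPT : Pᵀ ∈ colStochastic ℝ (Fin N) :=
    transpose_mem_colStochastic_iff_mem_rowStochastic.2 hP
  induction m with
  | zero => simp
  | succ m ih =>
    have hsum : ∑ i, (Pᵀ ^ m *ᵥ ξ) i = 0 := by
      rw [sum_mulVec_of_mem_colStochastic (pow_mem hPT m), hξ]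
    calc l1norm (Pᵀ ^ (m + 1) *ᵥ ξ) = l1norm (Pᵀ *ᵥ (Pᵀ ^ m *ᵥ ξ)) := by
          rw [pow_succ', mulVec_mulVec]
      _ ≤ (1 - α) * l1norm (Pᵀ ^ m *ᵥ ξ) := l1norm_transpose_mulVec_le_of_le_apply hP hPk hsum
      _ ≤ (1 - α) ^ (m + 1) * l1norm ξ := by
          rw [pow_succ', mul_assoc]
          gcongr

end Stochastic

namespace IsGenerator

variable {N : ℕ} {Q : Matrix (Fin N) (Fin N) ℝ}

theorem neg_le_diag (hQ : IsGenerator Q) {q : ℝ} {i : Fin N}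
    (hi : ∑ j ∈ univ.erase i, Q i j ≤ q) : -q ≤ Q i i := by
  linarith [add_sum_erase univ (Q i) (mem_univ i), hQ.2 i]

theorem mulVec_one (hQ : IsGenerator Q) : Q *ᵥ 1 = 0 := by
  ext i
  simpa [mulVec, dotProduct] using hQ.2 i

theorem smul_add_smul_one_nonneg (hQ : IsGenerator Q) {q s : ℝ} (hq : ∀ i, -q ≤ Q i i)
    (hs : 0 ≤ s) (i j : Fin N) : 0 ≤ (s • Q + (s * q) • 1) i j := by
  rcases eq_or_ne i j with rfl | hij
  · simpa [mul_add] using mul_nonneg hs (neg_le_iff_add_nonneg.1 (hq i))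
  · simpa [hij] using mul_nonneg hs (hQ.1 i j hij)

theorem exp_smul_mem_rowStochastic (hQ : IsGenerator Q) {s : ℝ} (hs : 0 ≤ s) :
    exp (s • Q) ∈ rowStochastic ℝ (Fin N) := by
  obtain ⟨q, hq⟩ := Q.exists_forall_neg_le_diag
  refine ⟨fun i j => ?_, exp_mulVec_eq_self (by rw [smul_mulVec, hQ.mulVec_one, smul_zero])⟩
  rw [exp_eq_exp_neg_smul_exp_add_smul_one _ (s * q), Matrix.smul_apply, smul_eq_mul]
  exact mul_nonneg (Real.exp_pos _).le (exp_nonneg_apply (hQ.smul_add_smul_one_nonneg hq hs) i j)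

theorem exp_neg_div_le_exp_inv_smul_apply (hQ : IsGenerator Q) {qstar qbar : ℝ} {k : Fin N}
    (hqstar : 0 < qstar) (hdiag : ∀ i, -qbar ≤ Q i i) (hmin : ∀ i, i ≠ k → qstar ≤ Q i k)
    (i : Fin N) : Real.exp (-qbar / qstar) ≤ exp (qstar⁻¹ • Q) i k := by
  set B := qstar⁻¹ • Q + (qstar⁻¹ * qbar) • (1 : Matrix (Fin N) (Fin N) ℝ)
  have hB := hQ.smul_add_smul_one_nonneg hdiag (inv_pos.2 hqstar).le
  have hone : 1 ≤ (1 + B) i k := by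
    rcases eq_or_ne i k with rfl | hik
    · simpa [B] using hB i i
    · simpa [B, hik, one_le_inv_mul₀ hqstar] using hmin i hik
  rw [exp_eq_exp_neg_smul_exp_add_smul_one _ (qstar⁻¹ * qbar), Matrix.smul_apply, smul_eq_mul,
    neg_div, div_eq_inv_mul]
  exact le_mul_of_one_le_right (Real.exp_pos _).le (hone.trans (one_add_apply_le_exp_apply hB i k))

theorem l1norm_exp_smul_transpose_mulVec_le (hQ : IsGenerator Q) {τ α : ℝ} {k : Fin N}
    (hτ : 0 < τ) (hk : ∀ i, α ≤ exp (τ • Q) i k) {ξ : Fin N → ℝ} (hξ : ∑ i, ξ i = 0)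
    {t : ℝ} (ht : 0 ≤ t) : l1norm (exp (t • Qᵀ) *ᵥ ξ) ≤ (1 - α) ^ ⌊t / τ⌋₊ * l1norm ξ := by
  set m := ⌊t / τ⌋₊
  have hr : 0 ≤ t - m * τ :=
    sub_nonneg.2 ((le_div_iff₀ hτ).1 (Nat.floor_le (div_nonneg ht hτ.le)))
  have hsplit : exp (t • Qᵀ) *ᵥ ξ = (exp ((t - m * τ) • Q))ᵀ *ᵥ ((exp (τ • Q))ᵀ ^ m *ᵥ ξ) := by
    rw [← transpose_smul, exp_transpose, exp_smul_eq_pow_mul_exp_smul Q t τ m, transpose_mul,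
      transpose_pow, mulVec_mulVec]
  calc l1norm (exp (t • Qᵀ) *ᵥ ξ) ≤ l1norm ((exp (τ • Q))ᵀ ^ m *ᵥ ξ) := by
        rw [hsplit]
        exact l1norm_transpose_mulVec_le_of_mem_rowStochastic (hQ.exp_smul_mem_rowStochastic hr) _
    _ ≤ (1 - α) ^ m * l1norm ξ :=
        l1norm_transpose_pow_mulVec_le_of_le_apply (hQ.exp_smul_mem_rowStochastic hτ.le) hk hξ m

end IsGenerator

theorem minorization_implies_mixing_general {N : ℕ}
    (Q : Matrix (Fin N) (Fin N) ℝ) (hQ : IsGenerator Q)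
    (kstar : Fin N) (qstar qbar : ℝ) (hqstar : 0 < qstar) (hqbar : 0 < qbar)
    (hmin : ∀ i, i ≠ kstar → qstar ≤ Q i kstar)
    (hrate : ∀ i, ∑ j ∈ Finset.univ.erase i, Q i j ≤ qbar) :
    Real.exp (-qbar / qstar) < 1 ∧
    ∀ ξ : Fin N → ℝ, (∑ i, ξ i) = 0 → ∀ t : ℝ, 0 ≤ t →
      l1norm (NormedSpace.exp (t • Qᵀ) *ᵥ ξ) ≤
        (1 - Real.exp (-qbar / qstar))⁻¹ *
          Real.exp (-(qstar * Real.log (1 / (1 - Real.exp (-qbar / qstar)))) * t) *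
          l1norm ξ := by
  set α := Real.exp (-qbar / qstar)
  have hα : α < 1 := Real.exp_lt_one_iff.2 (div_neg_of_neg_of_pos (neg_neg_of_pos hqbar) hqstar)
  refine ⟨hα, fun ξ hξ t ht => ?_⟩
  have hβ : 0 < 1 - α := sub_pos.2 hα
  have hk : ∀ i, α ≤ exp (qstar⁻¹ • Q) i kstar :=
    hQ.exp_neg_div_le_exp_inv_smul_apply hqstar (fun i => hQ.neg_le_diag (hrate i)) hmin
  have hdecay : Real.exp (-(qstar * Real.log (1 / (1 - α))) * t) = (1 - α) ^ (t * qstar) := by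
    rw [Real.rpow_def_of_pos hβ, one_div, Real.log_inv]
    ring_nf
  calc l1norm (exp (t • Qᵀ) *ᵥ ξ) ≤ (1 - α) ^ ⌊t * qstar⌋₊ * l1norm ξ := by
        simpa only [div_inv_eq_mul] using
          hQ.l1norm_exp_smul_transpose_mulVec_le (inv_pos.2 hqstar) hk hξ ht
    _ ≤ (1 - α)⁻¹ * (1 - α) ^ (t * qstar) * l1norm ξ := by
        refine mul_le_mul_of_nonneg_right ?_ (l1norm_nonneg ξ)
        exact Real.pow_floor_le_inv_mul_rpow hβ (by linarith [Real.exp_pos (-qbar / qstar)]) _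
    _ = _ := by rw [hdecay]

theorem minorization_implies_mixing {N : ℕ} (hN : 2 ≤ N)
    (Q : Matrix (Fin N) (Fin N) ℝ) (hQ : IsGenerator Q)
    (kstar : Fin N) (qstar qbar : ℝ) (hqstar : 0 < qstar) (hqbar : 0 < qbar)
    (hmin : ∀ i, i ≠ kstar → qstar ≤ Q i kstar)
    (hrate : ∀ i, ∑ j ∈ Finset.univ.erase i, Q i j ≤ qbar) :
    Real.exp (-qbar / qstar) < 1 ∧
    ∀ ξ : Fin N → ℝ, (∑ i, ξ i) = 0 → ∀ t : ℝ, 0 ≤ t →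
      l1norm (NormedSpace.exp (t • Qᵀ) *ᵥ ξ) ≤
        (1 - Real.exp (-qbar / qstar))⁻¹ *
          Real.exp (-(qstar * Real.log (1 / (1 - Real.exp (-qbar / qstar)))) * t) *
          l1norm ξ :=
  minorization_implies_mixing_general Q hQ kstar qstar qbar hqstar hqbar hmin hrate
end
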